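/- Let N be a positive integer, let A and B be the N×N matrices with A_{m,n} = 1 if m+n is even and 0 otherwise, and B_{m,n} = 1 if m+n is odd and 0 otherwise. Let e = (1,1,…,1)^⊤ ∈ ℝ^N and w ∈ ℝ^N with w_m = (−1)^{m+1}. Then for every u_0 ∈ ℝ^N and every real t, J_0(t) A u_0 + 2 (Σ_{l=1}^∞ J_{4l}(t)) A u_0 + 2 (Σ_{l=1}^∞ J_{4l−2}(t)) B u_0 = (1/2) ( (e·u_0) e + (w·u_0) cos(t) w ). -/

import Mathlib

open Real Matrix

/-- Bessel function of the first kind of nonnegative integer order n: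
J_n(t) = Σ_{m=0}^∞ ((−1)^m/(m!(n+m)!)) (t/2)^{n+2m}. -/
noncomputable def besselJ (n : ℕ) (t : ℝ) : ℝ :=
  ∑' m : ℕ, ((-1 : ℝ) ^ m / ((m.factorial : ℝ) * ((n + m).factorial : ℝ))) * (t / 2) ^ (n + 2 * m)

/-- A_{m,n} = 1 if m+n is even, 0 otherwise (1-based m, n; parity of
(m.1+1)+(n.1+1) equals parity of m.1+n.1). -/
def Amat (N : ℕ) : Matrix (Fin N) (Fin N) ℝ :=
  fun m n => if Even ((m.1 + 1) + (n.1 + 1)) then 1 else 0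

/-- B_{m,n} = 1 if m+n is odd, 0 otherwise (1-based m, n). -/
def Bmat (N : ℕ) : Matrix (Fin N) (Fin N) ℝ :=
  fun m n => if Odd ((m.1 + 1) + (n.1 + 1)) then 1 else 0

/-- e = (1,…,1)ᵀ. -/
def evec (N : ℕ) : Fin N → ℝ := fun _ => 1

/-- w_m = (−1)^{m+1} for 1-based m, i.e. (−1)^{m.1}. -/
def wvec (N : ℕ) : Fin N → ℝ := fun m => (-1 : ℝ) ^ m.1

/-!
The coefficients come from the Jacobi–Anger identities `1 = J₀ + 2 ∑ₖ J₂ₖ` and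
`cos t = J₀ + 2 ∑ₖ (-1)ᵏ J₂ₖ`; splitting `k` into odd and even indices and adding or subtracting
gives `J₀ + 2 ∑ₗ J₄ₗ₊₄ = (1 + cos t) / 2` and `2 ∑ₗ J₄ₗ₊₂ = (1 - cos t) / 2`. Both identities
follow by expanding each `J₂ₖ` as its power series and regrouping the absolutely convergent double
series by powers of `t`: for `ε = ±1`, the coefficient of `(t/2)²ⁿ` in `J₀ + 2 ∑ₖ εᵏ J₂ₖ` is the
binomial expansion of `εⁿ (1 - ε)²ⁿ / (2n)!` with the terms `j = n ± k` paired. On the matrix side,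
`A = (e eᵀ + w wᵀ) / 2` and `B = (e eᵀ - w wᵀ) / 2`.
-/

open Finset Nat

theorem HasSum.sum_antidiagonal {α A : Type*} [AddCommMonoid α] [TopologicalSpace α]
    [ContinuousAdd α] [RegularSpace α] [AddCommMonoid A] [HasAntidiagonal A]
    {f : A × A → α} {a : α} (hf : HasSum f a) :
    HasSum (fun n => ∑ p ∈ antidiagonal n, f p) a :=
  (HasAntidiagonal.sigmaAntidiagonalEquivProd.hasSum_iff.mpr hf).sigma fun n => by
    simpa [sum_attach] using hasSum_fintype fun p : antidiagonal n => f p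

theorem sum_range_two_mul_add_one_eq_sum_fold {M : Type*} [AddCommMonoid M] (ψ : ℕ → M) (n : ℕ) :
    ∑ j ∈ range (2 * n + 1), ψ j
      = ∑ k ∈ range (n + 1), if k = 0 then ψ n else ψ (n + k) + ψ (n - k) := by
  rw [show 2 * n + 1 = n + (n + 1) by ring, sum_range_add, ← sum_range_reflect ψ n,
    sum_range_succ', sum_range_succ', if_pos rfl, add_zero]
  simp only [succ_ne_zero, if_false, sum_add_distrib, Nat.sub_sub, add_comm 1]
  abel

theorem tsum_eq_zero_add_tsum_odd_add_tsum_even {E : Type*} [NormedAddCommGroup E]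
    [CompleteSpace E] {f : ℕ → E} (hf : Summable f) :
    ∑' k, f k = f 0 + ∑' l, f (2 * l + 1) + ∑' l, f (2 * l + 2) := by
  have hodd : Summable fun l => f (2 * l + 1) :=
    hf.comp_injective fun a b h => by simpa using h
  have heven : Summable fun l => f (2 * l) :=
    hf.comp_injective fun a b h => by simpa using h
  rw [← tsum_even_add_odd heven hodd, heven.tsum_eq_zero_add]
  simp only [mul_zero, mul_add, mul_one, add_right_comm]

noncomputable def besselTerm (n m : ℕ) (t : ℝ) : ℝ :=
  (-1) ^ m / (m ! * (n + m)! : ℝ) * (t / 2) ^ (n + 2 * m)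

theorem abs_besselTerm_two_mul_le (k m : ℕ) (t : ℝ) :
    |besselTerm (2 * k) m t| ≤ ((t / 2) ^ 2) ^ k / k ! * (((t / 2) ^ 2) ^ m / m !) := by
  have hfact : (k ! * m ! : ℝ) ≤ m ! * (2 * k + m)! := by
    rw [mul_comm]
    gcongr
    omega
  calc |besselTerm (2 * k) m t|
      = ((t / 2) ^ 2) ^ k * ((t / 2) ^ 2) ^ m / (m ! * (2 * k + m)!) := by
        rw [besselTerm, abs_mul, abs_div, abs_pow, abs_neg, abs_one, one_pow,
          abs_of_pos (by positivity), abs_pow, show 2 * k + 2 * m = 2 * (k + m) by ring, pow_mul,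
          sq_abs, pow_add]
        ring
    _ ≤ ((t / 2) ^ 2) ^ k * ((t / 2) ^ 2) ^ m / (k ! * m !) := by gcongr
    _ = _ := by ring

theorem summable_besselTerm_two_mul (k : ℕ) (t : ℝ) : Summable fun m => besselTerm (2 * k) m t :=
  .of_norm_bounded ((summable_pow_div_factorial _).mul_left _) (abs_besselTerm_two_mul_le k · t)

theorem summable_mul_besselTerm_two_mul {g : ℕ → ℝ} {C : ℝ} (hg : ∀ k, |g k| ≤ C) (t : ℝ) :
    Summable fun p : ℕ × ℕ => g p.1 * besselTerm (2 * p.1) p.2 t := by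
  have hC : 0 ≤ C := (abs_nonneg _).trans (hg 0)
  set x := (t / 2) ^ 2
  refine .of_norm_bounded (g := fun p : ℕ × ℕ => C * (x ^ p.1 / p.1 ! * (x ^ p.2 / p.2 !)))
    (((summable_pow_div_factorial x).mul_of_nonneg
    (summable_pow_div_factorial x) (fun _ => by positivity) (fun _ => by positivity)).mul_left C)
    fun p => ?_
  rw [norm_mul, Real.norm_eq_abs, Real.norm_eq_abs]
  exact mul_le_mul (hg p.1) (abs_besselTerm_two_mul_le p.1 p.2 t) (abs_nonneg _) hC

theorem sum_antidiagonal_mul_besselTerm (g : ℕ → ℝ) (n : ℕ) (t : ℝ) :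
    ∑ p ∈ antidiagonal n, g p.1 * besselTerm (2 * p.1) p.2 t
      = (∑ k ∈ range (n + 1), g k * ((-1) ^ (n - k) / ((n - k)! * (n + k)!)))
        * (t / 2) ^ (2 * n) := by
  rw [Nat.sum_antidiagonal_eq_sum_range_succ_mk, sum_mul]
  refine sum_congr rfl fun k hk => ?_
  have hkn : k ≤ n := Nat.lt_succ_iff.mp (mem_range.mp hk)
  rw [besselTerm, show 2 * k + (n - k) = n + k by omega, show 2 * k + 2 * (n - k) = 2 * n by omega]
  ring

theorem hasSum_mul_besselJ_two_mul {g : ℕ → ℝ} {C : ℝ} (hg : ∀ k, |g k| ≤ C) {t S : ℝ}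
    (hS : HasSum (fun n => (∑ k ∈ range (n + 1), g k * ((-1) ^ (n - k) / ((n - k)! * (n + k)!)))
      * (t / 2) ^ (2 * n)) S) :
    HasSum (fun k => g k * besselJ (2 * k) t) S := by
  have hF := (summable_mul_besselTerm_two_mul hg t).hasSum
  have hdiag := hF.sum_antidiagonal
  simp only [sum_antidiagonal_mul_besselTerm] at hdiag
  rw [hS.unique hdiag]
  exact hF.prod_fiberwise fun k => (summable_besselTerm_two_mul k t).hasSum.mul_left (g k)

def besselWeight (ε : ℝ) (k : ℕ) : ℝ := (if k = 0 then 1 else 2) * ε ^ k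

theorem div_factorial_eq_sum_range (ε : ℝ) (n : ℕ) :
    (1 - ε) ^ n / n ! = ∑ j ∈ range (n + 1), (-ε) ^ j / (j ! * (n - j)!) := by
  rw [sub_eq_neg_add, add_pow, sum_div]
  refine sum_congr rfl fun j hj => ?_
  rw [cast_choose ℝ (Nat.lt_succ_iff.mp (mem_range.mp hj)), one_pow, mul_one]
  field_simp

theorem sum_range_besselWeight_mul {ε : ℝ} (hε : ε ^ 2 = 1) (n : ℕ) :
    ∑ k ∈ range (n + 1), besselWeight ε k * ((-1) ^ (n - k) / ((n - k)! * (n + k)!))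
      = ε ^ n * (1 - ε) ^ (2 * n) / (2 * n)! := by
  unfold besselWeight
  rw [mul_div_assoc, div_factorial_eq_sum_range, mul_sum, sum_range_two_mul_add_one_eq_sum_fold]
  refine sum_congr rfl fun k hk => ?_
  obtain ⟨d, rfl⟩ : ∃ d, n = k + d := ⟨n - k, by have := mem_range.mp hk; omega⟩
  have hd : (ε ^ 2) ^ d = 1 := by rw [hε, one_pow]
  split_ifs with hk0
  · subst hk0
    rw [zero_add, Nat.sub_zero, add_zero, show 2 * d - d = d by omega, neg_pow ε]
    linear_combination (-((-1) ^ d / (d ! * d !))) * hd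
  · have hkd : (ε ^ 2) ^ (k + d) = 1 := by rw [hε, one_pow]
    rw [show k + d - k = d by omega, show k + d + k = 2 * k + d by ring,
      show 2 * (k + d) - (2 * k + d) = d by omega, show 2 * (k + d) - d = 2 * k + d by omega,
      neg_pow ε, neg_pow ε, pow_add (-1 : ℝ), pow_mul, neg_one_sq, one_pow, one_mul]
    linear_combination (-(ε ^ k * (-1) ^ d / (d ! * (2 * k + d)!))) * (hkd + hd)

theorem hasSum_besselWeight_mul_besselJ {ε t S : ℝ} (hε : ε ^ 2 = 1)
    (hS : HasSum (fun n => ε ^ n * (1 - ε) ^ (2 * n) / (2 * n)! * (t / 2) ^ (2 * n)) S) :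
    HasSum (fun k => besselWeight ε k * besselJ (2 * k) t) S := by
  have hε' : |ε| = 1 := by rw [← abs_one, ← sq_eq_sq_iff_abs_eq_abs, hε, one_pow]
  refine hasSum_mul_besselJ_two_mul (C := 2) (fun k => ?_) ?_
  · rw [besselWeight, abs_mul, abs_pow, hε', one_pow, mul_one]
    split_ifs <;> norm_num
  · simpa only [sum_range_besselWeight_mul hε] using hS

theorem hasSum_besselWeight_mul_besselJ_one (t : ℝ) :
    HasSum (fun k => besselWeight 1 k * besselJ (2 * k) t) 1 := by
  refine hasSum_besselWeight_mul_besselJ (one_pow 2) ?_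
  convert hasSum_ite_eq 0 (1 : ℝ) using 2 with n
  rcases n.eq_zero_or_pos with rfl | hn
  · simp
  · simp [hn.ne', zero_pow (by omega : 2 * n ≠ 0)]

theorem hasSum_besselWeight_mul_besselJ_neg_one (t : ℝ) :
    HasSum (fun k => besselWeight (-1) k * besselJ (2 * k) t) (cos t) := by
  refine hasSum_besselWeight_mul_besselJ neg_one_sq ?_
  convert hasSum_cos t using 2 with n
  rw [mul_div_right_comm, mul_assoc, ← mul_pow, show (1 - -1) * (t / 2) = t by ring]
  ring

theorem besselJ_zero_add_tsum_eq_of_hasSum {ε t S : ℝ} (hε : ε ^ 2 = 1)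
    (h : HasSum (fun k => besselWeight ε k * besselJ (2 * k) t) S) :
    besselJ 0 t + 2 * ε * ∑' l, besselJ (4 * l + 2) t + 2 * ∑' l, besselJ (4 * (l + 1)) t = S := by
  have hodd (l : ℕ) : ε ^ (2 * l + 1) = ε := by rw [pow_succ, pow_mul, hε, one_pow, one_mul]
  have heven (l : ℕ) : ε ^ (2 * l + 2) = 1 := by rw [← mul_add_one, pow_mul, hε, one_pow]
  rw [← h.tsum_eq, tsum_eq_zero_add_tsum_odd_add_tsum_even h.summable, ← tsum_mul_left,
    ← tsum_mul_left]
  simp only [besselWeight, hodd, heven, add_eq_zero, two_ne_zero, one_ne_zero, and_false,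
    if_false, if_true, mul_zero, pow_zero, mul_one, one_mul,
    show ∀ l, 2 * (2 * l + 1) = 4 * l + 2 by intro; ring,
    show ∀ l, 2 * (2 * l + 2) = 4 * (l + 1) by intro; ring]

theorem besselJ_zero_add_two_mul_tsum_besselJ_four_mul (t : ℝ) :
    besselJ 0 t + 2 * ∑' l, besselJ (4 * (l + 1)) t = (1 + cos t) / 2 := by
  have h₁ := besselJ_zero_add_tsum_eq_of_hasSum (one_pow 2)
    (hasSum_besselWeight_mul_besselJ_one t)
  have h₂ := besselJ_zero_add_tsum_eq_of_hasSum neg_one_sq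
    (hasSum_besselWeight_mul_besselJ_neg_one t)
  linarith

theorem two_mul_tsum_besselJ_four_mul_add_two (t : ℝ) :
    2 * ∑' l, besselJ (4 * l + 2) t = (1 - cos t) / 2 := by
  have h₁ := besselJ_zero_add_tsum_eq_of_hasSum (one_pow 2)
    (hasSum_besselWeight_mul_besselJ_one t)
  have h₂ := besselJ_zero_add_tsum_eq_of_hasSum neg_one_sq
    (hasSum_besselWeight_mul_besselJ_neg_one t)
  linarith

theorem wvec_mul_wvec {N : ℕ} (i j : Fin N) :
    wvec N i * wvec N j = if Even ((i.1 + 1) + (j.1 + 1)) then 1 else -1 := by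
  rw [wvec, wvec, ← pow_add, neg_one_pow_eq_ite,
    show i.1 + 1 + (j.1 + 1) = i.1 + j.1 + 1 + 1 by ring]
  simp only [Nat.even_add_one, not_not]

theorem Amat_eq (N : ℕ) :
    Amat N = (1 / 2 : ℝ) • (vecMulVec (evec N) (evec N) + vecMulVec (wvec N) (wvec N)) := by
  ext i j
  simp only [Amat, Matrix.smul_apply, Matrix.add_apply, vecMulVec_apply, wvec_mul_wvec, evec]
  split_ifs <;> norm_num

theorem Bmat_eq (N : ℕ) :
    Bmat N = (1 / 2 : ℝ) • (vecMulVec (evec N) (evec N) - vecMulVec (wvec N) (wvec N)) := by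
  ext i j
  simp only [Bmat, Matrix.smul_apply, Matrix.sub_apply, vecMulVec_apply, wvec_mul_wvec, evec,
    ← Nat.not_even_iff_odd]
  split_ifs <;> norm_num

theorem Amat_mulVec (N : ℕ) (u : Fin N → ℝ) :
    Amat N *ᵥ u = (1 / 2 : ℝ) • ((evec N ⬝ᵥ u) • evec N + (wvec N ⬝ᵥ u) • wvec N) := by
  simp [Amat_eq, smul_mulVec, add_mulVec, vecMulVec_mulVec]

theorem Bmat_mulVec (N : ℕ) (u : Fin N → ℝ) :
    Bmat N *ᵥ u = (1 / 2 : ℝ) • ((evec N ⬝ᵥ u) • evec N - (wvec N ⬝ᵥ u) • wvec N) := by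
  simp [Bmat_eq, smul_mulVec, sub_mulVec, vecMulVec_mulVec]

theorem stmt15_general (N : ℕ) (u0 : Fin N → ℝ) (t : ℝ) :
    besselJ 0 t • (Amat N).mulVec u0
      + (2 * ∑' l : ℕ, besselJ (4 * (l + 1)) t) • (Amat N).mulVec u0
      + (2 * ∑' l : ℕ, besselJ (4 * l + 2) t) • (Bmat N).mulVec u0
    = (1 / 2 : ℝ) • ((evec N ⬝ᵥ u0) • evec N + ((wvec N ⬝ᵥ u0) * Real.cos t) • wvec N) := by
  rw [← add_smul, besselJ_zero_add_two_mul_tsum_besselJ_four_mul,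
    two_mul_tsum_besselJ_four_mul_add_two, Amat_mulVec, Bmat_mulVec]
  module

/-- for every u_0 ∈ ℝ^N and real t,
J_0(t) A u_0 + 2(Σ_{l=1}^∞ J_{4l}(t)) A u_0 + 2(Σ_{l=1}^∞ J_{4l−2}(t)) B u_0
= (1/2)((e·u_0) e + (w·u_0) cos t · w). -/
theorem stmt15 (N : ℕ) (hN : 0 < N) (u0 : Fin N → ℝ) (t : ℝ) :
    besselJ 0 t • (Amat N).mulVec u0
      + (2 * ∑' l : ℕ, besselJ (4 * (l + 1)) t) • (Amat N).mulVec u0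
      + (2 * ∑' l : ℕ, besselJ (4 * l + 2) t) • (Bmat N).mulVec u0
    = (1 / 2 : ℝ) • ((evec N ⬝ᵥ u0) • evec N + ((wvec N ⬝ᵥ u0) * Real.cos t) • wvec N) :=
  stmt15_general N u0 t
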